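/- arXiv:1510.05492 — 2 statements merged into one kernel-verified Lean document; each statement's English description precedes it below -/
import Mathlib

section
/- Let Y be the Moore–Penrose pseudoinverse of X, and let b ∈ ℝ^n with ‖b‖₂ = 1 and B b = β b for some β ≠ 0. Set m := Yᵀ b and c := m/‖m‖₂. Then β > 0 and Xᵀ c = √β · b (equivalently, cᵀ X = √β · bᵀ). -/
open Matrix

lemma vecMulVec_mulVec' {n : ℕ} (u v w : Fin n → ℝ) :
    (vecMulVec u v).mulVec w = (v ⬝ᵥ w) • u := by
  ext i
  simp [vecMulVec_apply, mulVec, dotProduct, Finset.mul_sum, Finset.sum_mul,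
    mul_comm, mul_left_comm]

lemma vecMulVec_transpose' {n : ℕ} (u : Fin n → ℝ) :
    (vecMulVec u u)ᵀ = vecMulVec u u := by
  ext i j
  simp [vecMulVec_apply, transpose_apply, mul_comm]

/-- If `Y` is the Moore–Penrose pseudoinverse of `X` and `b` is a unit
vector with `B b = β b` for some `β ≠ 0`, then with `m := Yᵀ b` and `c := m/‖m‖₂` one has
`β > 0` and `Xᵀ c = √β · b`. -/
theorem stmt9 {p n : ℕ} (X : Matrix (Fin p) (Fin n) ℝ)
    (e : Fin n → ℝ) (he : e = fun _ => (1 : ℝ))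
    (d : Fin n → ℝ) (hd : d = (Xᵀ * X).mulVec e)
    (twoM : ℝ) (htwoM : twoM = e ⬝ᵥ (Xᵀ * X).mulVec e) (hm : twoM ≠ 0)
    (B : Matrix (Fin n) (Fin n) ℝ)
    (hB : B = Xᵀ * X - twoM⁻¹ • vecMulVec d d)
    (Y : Matrix (Fin n) (Fin p) ℝ)
    (hY₁ : X * Y * X = X) (hY₂ : Y * X * Y = Y)
    (hY₃ : (X * Y)ᵀ = X * Y) (hY₄ : (Y * X)ᵀ = Y * X)
    (b : Fin n → ℝ) (hb : Real.sqrt (b ⬝ᵥ b) = 1)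
    (β : ℝ) (hβ : β ≠ 0) (hBb : B.mulVec b = β • b)
    (m : Fin p → ℝ) (hmdef : m = Yᵀ.mulVec b)
    (c : Fin p → ℝ) (hc : c = (Real.sqrt (m ⬝ᵥ m))⁻¹ • m) :
    0 < β ∧ Xᵀ.mulVec c = Real.sqrt β • b := by
  have hYX : Y * X = Xᵀ * Yᵀ := by rw [← hY₄, transpose_mul]
  have hYtXt : Yᵀ * Xᵀ = X * Y := by rw [← transpose_mul, hY₃]
  -- (Y*X) * (Xᵀ*X) = Xᵀ*X
  have hPA : (Y * X) * (Xᵀ * X) = Xᵀ * X := by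
    rw [hYX, Matrix.mul_assoc Xᵀ Yᵀ (Xᵀ * X), ← Matrix.mul_assoc Yᵀ Xᵀ X, hYtXt, hY₁]
  -- Yᵀ * (Xᵀ*X) = X
  have hYA : Yᵀ * (Xᵀ * X) = X := by
    rw [← Matrix.mul_assoc, hYtXt, hY₁]
  -- (Y*X) fixes d
  have hPd : (Y * X).mulVec d = d := by
    rw [hd, mulVec_mulVec, hPA]
  have hBbv : B.mulVec b = (Xᵀ * X).mulVec b - (twoM⁻¹ * (d ⬝ᵥ b)) • d := by
    rw [hB, sub_mulVec, smul_mulVec, vecMulVec_mulVec', smul_smul]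
  -- (Y*X) fixes b
  have hPb : (Y * X).mulVec b = b := by
    have h1 : (Y * X).mulVec (B.mulVec b) = B.mulVec b := by
      rw [hBbv, mulVec_sub, mulVec_smul, hPd, mulVec_mulVec, hPA]
    rw [hBb, mulVec_smul] at h1
    exact smul_right_injective (Fin n → ℝ) hβ h1
  -- Xᵀ m = b
  have hXm : Xᵀ.mulVec m = b := by
    rw [hmdef, mulVec_mulVec, ← transpose_mul, hY₄, hPb]
  -- d ⬝ᵥ e = twoM
  have hde : d ⬝ᵥ e = twoM := by
    rw [hd, htwoM, dotProduct_comm]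
  -- B e = 0
  have hBe : B.mulVec e = 0 := by
    rw [hB, sub_mulVec, smul_mulVec, vecMulVec_mulVec', hde, ← hd,
      smul_smul, inv_mul_cancel₀ hm, one_smul, sub_self]
  -- e ⬝ᵥ b = 0
  have heb : e ⬝ᵥ b = 0 := by
    have hBsymm : Bᵀ = B := by
      rw [hB, transpose_sub, transpose_smul, transpose_mul, transpose_transpose,
        vecMulVec_transpose']
    have h2 : e ⬝ᵥ B.mulVec b = 0 := by
      rw [dotProduct_mulVec, ← mulVec_transpose, hBsymm, hBe, zero_dotProduct]
    rw [hBb, dotProduct_smul, smul_eq_mul] at h2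
    exact (mul_eq_zero.mp h2).resolve_left hβ
  -- b ⬝ᵥ b = 1
  have hbb : b ⬝ᵥ b = 1 := Real.sqrt_eq_one.mp hb
  -- β • m = X b - (twoM⁻¹ * (d⬝b)) • X e
  have hβm : β • m = X.mulVec b - (twoM⁻¹ * (d ⬝ᵥ b)) • X.mulVec e := by
    have : Yᵀ.mulVec (B.mulVec b) = β • m := by
      rw [hBb, mulVec_smul, hmdef]
    rw [← this, hBbv, mulVec_sub, mulVec_smul, mulVec_mulVec, hYA, hd,
      mulVec_mulVec, hYA]
  -- β * (m ⬝ᵥ m) = 1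
  have hkey : β * (m ⬝ᵥ m) = 1 := by
    have hmXb : m ⬝ᵥ X.mulVec b = 1 := by
      rw [dotProduct_mulVec, ← mulVec_transpose, hXm, hbb]
    have hmXe : m ⬝ᵥ X.mulVec e = 0 := by
      rw [dotProduct_mulVec, ← mulVec_transpose, hXm, dotProduct_comm, heb]
    have := congrArg (fun v => m ⬝ᵥ v) hβm
    simp only [dotProduct_smul, dotProduct_sub, smul_eq_mul, hmXb, hmXe,
      mul_zero, sub_zero] at this
    linarith [this]
  have hmm_nonneg : 0 ≤ m ⬝ᵥ m :=
    Finset.sum_nonneg fun i _ => mul_self_nonneg (m i)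
  have hmm_pos : 0 < m ⬝ᵥ m := by
    rcases hmm_nonneg.lt_or_eq with h | h
    · exact h
    · exfalso; rw [← h, mul_zero] at hkey; exact zero_ne_one hkey
  have hβpos : 0 < β := by
    have := hkey
    nlinarith
  refine ⟨hβpos, ?_⟩
  have hmm : m ⬝ᵥ m = β⁻¹ := by
    field_simp at hkey ⊢
    linarith [hkey]
  rw [hc, mulVec_smul, hXm, hmm, Real.sqrt_inv, inv_inv]
end

section
/- Let Y be the Moore–Penrose pseudoinverse of X, and let b_1,...,b_r be orthonormal vectors in ℝ^n with B b_j = β_j b_j and β_j ≠ 0 for each j. Set m_j := Yᵀ b_j and c_j := m_j/‖m_j‖₂ (each m_j is nonzero). Then the deflated data matrix X' := (I − Σ_{j=1}^{r} c_j c_jᵀ) X satisfies X'ᵀ X' = XᵀX − Σ_{j=1}^{r} β_j b_j b_jᵀ. -/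
/-!
Write `A = XᵀX`. As `B e = 0` and `B` is symmetric, each eigenvector `b j` is orthogonal to `e`,
and `B (b j) = A (w j)` with `w j = b j - (dᵀ b j / 2m) e`, so `b j = (β j)⁻¹ A (w j)` lies in the
range of `Xᵀ`. The Penrose identities `XYX = X`, `(XY)ᵀ = XY` give `Yᵀ XᵀX = X`, hence
`m j = (β j)⁻¹ X (w j)`, `Xᵀ (m j) = b j` and `m j ⬝ m k = (β j)⁻¹ (w j ⬝ b k) = (β j)⁻¹ δ_jk`.
So the `c j` are orthonormal, `P = ∑ c j c jᵀ` is an orthogonal projection,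
`X'ᵀX' = XᵀX - Xᵀ P X`, and `Xᵀ (c j) (Xᵀ (c j))ᵀ = (m j ⬝ m j)⁻¹ b j b jᵀ = β j b j b jᵀ`.
-/

open Matrix

variable {ι κ τ R : Type*}

section Deflation

variable [CommRing R]

lemma transpose_mul_vecMulVec_self_mul [Fintype κ] (X : Matrix κ ι R) (u : κ → R) :
    Xᵀ * vecMulVec u u * X = vecMulVec (Xᵀ *ᵥ u) (Xᵀ *ᵥ u) := by
  rw [mul_vecMulVec, vecMulVec_mul, mulVec_transpose]

lemma isIdempotentElem_sum_vecMulVec_self [Fintype κ] [Fintype τ] [DecidableEq τ]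
    {c : τ → κ → R} (hc : ∀ i j, c i ⬝ᵥ c j = if i = j then 1 else 0) :
    IsIdempotentElem (∑ j, vecMulVec (c j) (c j)) := by
  rw [IsIdempotentElem, Finset.sum_mul_sum]
  refine Finset.sum_congr rfl fun i _ => ?_
  simp [vecMulVec_mul_vecMulVec, hc, ite_smul, apply_ite (vecMulVec (c i))]

lemma isSymm_sum_vecMulVec_self [Fintype τ] (c : τ → κ → R) :
    (∑ j, vecMulVec (c j) (c j)).IsSymm := by
  simp [IsSymm, transpose_sum]

lemma transpose_mul_self_of_one_sub_mul [Fintype κ] [DecidableEq κ] (X : Matrix κ ι R)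
    {P : Matrix κ κ R} (hPt : P.IsSymm) (hP : IsIdempotentElem P) :
    ((1 - P) * X)ᵀ * ((1 - P) * X) = Xᵀ * X - Xᵀ * P * X := by
  rw [transpose_mul, transpose_sub, transpose_one, hPt.eq, Matrix.mul_assoc,
    ← Matrix.mul_assoc (1 - P), hP.one_sub.eq, Matrix.sub_mul, Matrix.one_mul, Matrix.mul_sub,
    Matrix.mul_assoc]

end Deflation

lemma Matrix.IsSymm.dotProduct_eq_zero_of_mulVec_eq_smul [CommRing R] [NoZeroDivisors R]
    [Fintype ι] {B : Matrix ι ι R} (hB : B.IsSymm)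
    {e b : ι → R} {β : R} (he : B *ᵥ e = 0) (hb : B *ᵥ b = β • b) (hβ : β ≠ 0) :
    e ⬝ᵥ b = 0 := by
  have : β * (e ⬝ᵥ b) = 0 := by
    rw [← smul_eq_mul, ← dotProduct_smul, ← hb, dotProduct_mulVec, ← mulVec_transpose, hB.eq, he,
      zero_dotProduct]
  exact (mul_eq_zero.mp this).resolve_left hβ

section Modularity

variable [Field R] [Fintype ι]

def modularityMatrix (A : Matrix ι ι R) (e : ι → R) : Matrix ι ι R :=
  A - (e ⬝ᵥ A *ᵥ e)⁻¹ • vecMulVec (A *ᵥ e) (A *ᵥ e)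

lemma isSymm_modularityMatrix {A : Matrix ι ι R} (hA : A.IsSymm) (e : ι → R) :
    (modularityMatrix A e).IsSymm :=
  hA.sub (IsSymm.smul (transpose_vecMulVec _ _) _)

lemma modularityMatrix_mulVec (A : Matrix ι ι R) (e b : ι → R) :
    modularityMatrix A e *ᵥ b = A *ᵥ (b - ((e ⬝ᵥ A *ᵥ e)⁻¹ * (A *ᵥ e ⬝ᵥ b)) • e) := by
  rw [modularityMatrix, sub_mulVec, smul_mulVec, vecMulVec_mulVec, op_smul_eq_smul, mulVec_sub,
    mulVec_smul, smul_smul]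

lemma modularityMatrix_mulVec_self {A : Matrix ι ι R} {e : ι → R} (he : e ⬝ᵥ A *ᵥ e ≠ 0) :
    modularityMatrix A e *ᵥ e = 0 := by
  rw [modularityMatrix_mulVec, dotProduct_comm (A *ᵥ e), inv_mul_cancel₀ he, one_smul, sub_self,
    mulVec_zero]

end Modularity

section Pseudoinverse

lemma transpose_mul_transpose_mul_self_of_mul_mul_self [CommRing R] [Fintype ι] [Fintype κ]
    {X : Matrix κ ι R} {Y : Matrix ι κ R} (h₁ : X * Y * X = X) (h₃ : (X * Y)ᵀ = X * Y) :
    Yᵀ * (Xᵀ * X) = X := by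
  rw [← Matrix.mul_assoc, ← transpose_mul, h₃, h₁]

variable [Field R] [Fintype ι] [Fintype κ] {X : Matrix κ ι R} {Y : Matrix ι κ R}
  {w b : ι → R} {β : R}

lemma transpose_mulVec_eq_of_mulVec_eq_smul (hYX : Yᵀ * (Xᵀ * X) = X)
    (hw : (Xᵀ * X) *ᵥ w = β • b) (hβ : β ≠ 0) : Yᵀ *ᵥ b = β⁻¹ • X *ᵥ w := by
  rw [← hYX, ← mulVec_mulVec, hw, mulVec_smul, smul_smul, inv_mul_cancel₀ hβ, one_smul]

lemma transpose_mulVec_transpose_mulVec_of_mulVec_eq_smul (hYX : Yᵀ * (Xᵀ * X) = X)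
    (hw : (Xᵀ * X) *ᵥ w = β • b) (hβ : β ≠ 0) : Xᵀ *ᵥ (Yᵀ *ᵥ b) = b := by
  rw [transpose_mulVec_eq_of_mulVec_eq_smul hYX hw hβ, mulVec_smul, mulVec_mulVec, hw, smul_smul,
    inv_mul_cancel₀ hβ, one_smul]

lemma dotProduct_transpose_mulVec_of_mulVec_eq_smul (hYX : Yᵀ * (Xᵀ * X) = X)
    (hw : (Xᵀ * X) *ᵥ w = β • b) (hβ : β ≠ 0) {w' b' : ι → R} {β' : R}
    (hw' : (Xᵀ * X) *ᵥ w' = β' • b') (hβ' : β' ≠ 0) :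
    (Yᵀ *ᵥ b) ⬝ᵥ (Yᵀ *ᵥ b') = β⁻¹ * (w ⬝ᵥ b') := by
  rw [transpose_mulVec_eq_of_mulVec_eq_smul hYX hw hβ, smul_dotProduct, smul_eq_mul,
    dotProduct_comm, dotProduct_mulVec, ← mulVec_transpose,
    transpose_mulVec_transpose_mulVec_of_mulVec_eq_smul hYX hw' hβ', dotProduct_comm]

end Pseudoinverse

section Normalization

lemma dotProduct_self_nonneg [Fintype κ] [Ring R] [LinearOrder R] [IsStrictOrderedRing R]
    (v : κ → R) : 0 ≤ v ⬝ᵥ v :=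
  Fintype.sum_nonneg fun _ => mul_self_nonneg _

lemma dotProduct_inv_sqrt_smul_eq_ite [Fintype κ] [DecidableEq τ] {m : τ → κ → ℝ}
    (horth : ∀ i j, i ≠ j → m i ⬝ᵥ m j = 0) (hm : ∀ i, m i ≠ 0) (i j : τ) :
    ((√(m i ⬝ᵥ m i))⁻¹ • m i) ⬝ᵥ ((√(m j ⬝ᵥ m j))⁻¹ • m j) = if i = j then 1 else 0 := by
  split_ifs with h
  · subst h
    rw [smul_dotProduct, dotProduct_smul, smul_eq_mul, smul_eq_mul, ← mul_assoc, ← mul_inv,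
      Real.mul_self_sqrt (dotProduct_self_nonneg _),
      inv_mul_cancel₀ (dotProduct_self_eq_zero.not.mpr (hm i))]
  · rw [smul_dotProduct, dotProduct_smul, horth i j h, smul_zero, smul_zero]

lemma vecMulVec_inv_sqrt_smul_self {s : ℝ} (hs : 0 ≤ s) (v : κ → ℝ) :
    vecMulVec ((√s)⁻¹ • v) ((√s)⁻¹ • v) = s⁻¹ • vecMulVec v v := by
  rw [smul_vecMulVec, vecMulVec_smul, smul_smul, ← mul_inv, Real.mul_self_sqrt hs]

end Normalization

theorem stmt10_general {p n r : ℕ} (X : Matrix (Fin p) (Fin n) ℝ)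
    (e : Fin n → ℝ)
    (d : Fin n → ℝ) (hd : d = (Xᵀ * X).mulVec e)
    (twoM : ℝ) (htwoM : twoM = e ⬝ᵥ (Xᵀ * X).mulVec e) (hm : twoM ≠ 0)
    (B : Matrix (Fin n) (Fin n) ℝ)
    (hB : B = Xᵀ * X - twoM⁻¹ • vecMulVec d d)
    (Y : Matrix (Fin n) (Fin p) ℝ)
    (hY₁ : X * Y * X = X)
    (hY₃ : (X * Y)ᵀ = X * Y)
    (b : Fin r → Fin n → ℝ)
    (hortho : ∀ i j : Fin r, b i ⬝ᵥ b j = if i = j then 1 else 0)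
    (β : Fin r → ℝ) (hβ : ∀ j : Fin r, β j ≠ 0)
    (heig : ∀ j : Fin r, B.mulVec (b j) = β j • b j)
    (m : Fin r → Fin p → ℝ) (hmdef : ∀ j : Fin r, m j = Yᵀ.mulVec (b j))
    (c : Fin r → Fin p → ℝ)
    (hc : ∀ j : Fin r, c j = (Real.sqrt (m j ⬝ᵥ m j))⁻¹ • m j)
    (X' : Matrix (Fin p) (Fin n) ℝ)
    (hX' : X' = (1 - ∑ j : Fin r, vecMulVec (c j) (c j)) * X) :
    (∀ j : Fin r, m j ≠ 0) ∧
      X'ᵀ * X' = Xᵀ * X - ∑ j : Fin r, β j • vecMulVec (b j) (b j) := by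
  replace hB : B = modularityMatrix (Xᵀ * X) e := by rw [hB, hd, htwoM, modularityMatrix]
  subst hB hX'
  have hA : (Xᵀ * X).IsSymm := by rw [IsSymm, transpose_mul, transpose_transpose]
  have heb : ∀ j, e ⬝ᵥ b j = 0 := fun j =>
    (isSymm_modularityMatrix hA e).dotProduct_eq_zero_of_mulVec_eq_smul
      (modularityMatrix_mulVec_self (htwoM ▸ hm)) (heig j) (hβ j)
  set w : Fin r → Fin n → ℝ := fun j => b j - (twoM⁻¹ * (d ⬝ᵥ b j)) • e
  have hw : ∀ j, (Xᵀ * X) *ᵥ w j = β j • b j := fun j => by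
    rw [← heig j, modularityMatrix_mulVec, ← htwoM, ← hd]
  have hYX : Yᵀ * (Xᵀ * X) = X := transpose_mul_transpose_mul_self_of_mul_mul_self hY₁ hY₃
  have hXm : ∀ j, Xᵀ *ᵥ m j = b j := fun j => by
    rw [hmdef]; exact transpose_mulVec_transpose_mulVec_of_mulVec_eq_smul hYX (hw j) (hβ j)
  have hmm : ∀ j k, m j ⬝ᵥ m k = (β j)⁻¹ * (b j ⬝ᵥ b k) := fun j k => by
    rw [hmdef, hmdef, dotProduct_transpose_mulVec_of_mulVec_eq_smul hYX (hw j) (hβ j) (hw k) (hβ k)]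
    simp only [w, sub_dotProduct, smul_dotProduct, heb, smul_zero, sub_zero]
  have hmne : ∀ j, m j ≠ 0 := fun j h => by simpa [← hXm j, h] using hortho j j
  have hcc : ∀ i j, c i ⬝ᵥ c j = if i = j then 1 else 0 := fun i j => by
    rw [hc, hc]
    exact dotProduct_inv_sqrt_smul_eq_ite (fun i j hij => by rw [hmm, hortho, if_neg hij, mul_zero])
      hmne i j
  refine ⟨hmne, ?_⟩
  rw [transpose_mul_self_of_one_sub_mul X (isSymm_sum_vecMulVec_self c)
    (isIdempotentElem_sum_vecMulVec_self hcc), Matrix.mul_sum, Matrix.sum_mul]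
  congr 1
  refine Finset.sum_congr rfl fun j _ => ?_
  rw [transpose_mul_vecMulVec_self_mul, hc, mulVec_smul, hXm,
    vecMulVec_inv_sqrt_smul_self (dotProduct_self_nonneg _), hmm, hortho, if_pos rfl, mul_one,
    inv_inv]

/-- If `Y` is the Moore–Penrose pseudoinverse of `X` and `b 1, ..., b r`
are orthonormal eigenvectors of `B` with nonzero eigenvalues `β j`, then each
`m j := Yᵀ (b j)` is nonzero and the deflated matrix `X' := (I − ∑ c_j c_jᵀ) X`,
where `c j := m j/‖m j‖₂`, satisfies `X'ᵀ X' = XᵀX − ∑ β_j b_j b_jᵀ`. -/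
theorem stmt10 {p n r : ℕ} (X : Matrix (Fin p) (Fin n) ℝ)
    (e : Fin n → ℝ) (he : e = fun _ => (1 : ℝ))
    (d : Fin n → ℝ) (hd : d = (Xᵀ * X).mulVec e)
    (twoM : ℝ) (htwoM : twoM = e ⬝ᵥ (Xᵀ * X).mulVec e) (hm : twoM ≠ 0)
    (B : Matrix (Fin n) (Fin n) ℝ)
    (hB : B = Xᵀ * X - twoM⁻¹ • vecMulVec d d)
    (Y : Matrix (Fin n) (Fin p) ℝ)
    (hY₁ : X * Y * X = X) (hY₂ : Y * X * Y = Y)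
    (hY₃ : (X * Y)ᵀ = X * Y) (hY₄ : (Y * X)ᵀ = Y * X)
    (b : Fin r → Fin n → ℝ)
    (hortho : ∀ i j : Fin r, b i ⬝ᵥ b j = if i = j then 1 else 0)
    (β : Fin r → ℝ) (hβ : ∀ j : Fin r, β j ≠ 0)
    (heig : ∀ j : Fin r, B.mulVec (b j) = β j • b j)
    (m : Fin r → Fin p → ℝ) (hmdef : ∀ j : Fin r, m j = Yᵀ.mulVec (b j))
    (c : Fin r → Fin p → ℝ)
    (hc : ∀ j : Fin r, c j = (Real.sqrt (m j ⬝ᵥ m j))⁻¹ • m j)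
    (X' : Matrix (Fin p) (Fin n) ℝ)
    (hX' : X' = (1 - ∑ j : Fin r, vecMulVec (c j) (c j)) * X) :
    (∀ j : Fin r, m j ≠ 0) ∧
      X'ᵀ * X' = Xᵀ * X - ∑ j : Fin r, β j • vecMulVec (b j) (b j) :=
  stmt10_general X e d hd twoM htwoM hm B hB Y hY₁ hY₃ b hortho β hβ heig m hmdef c hc X' hX'
end
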